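/- In the periodic regime of the greedy matrix A(n): if the defining matrices satisfy M^{k+p̄} = M^k for some k ≥ 2 and period candidate p̄, then l(k+p̄) = l(k) + p̄, where l(k) is the index of the first column that is not complete (contains fewer than n+1 ones) among the columns of the matrix consisting of the first k-1 rows of A(n). -/

import Mathlib

/-!
Every one of the first `k - 1` rows of `A(n)` is full: it carries exactly `n + 1` ones, all in
columns `≤ c(k)`. Counting these `(k - 1)(n + 1)` ones by columns, the `l(k) - 1` complete columns
contribute `(l(k) - 1)(n + 1)`, and the remaining ones lie in columns `≥ l(k)`, where the greedy
rule forbids any one above row `f(k)`; so they are exactly the ones of `M^k`. Hence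
`(k - 1)(n + 1) = (l(k) - 1)(n + 1) + #M^k`, and comparing this identity at `k` and `k + p̄`,
where `#M^k = #M^(k+p̄)`, gives `l(k + p̄) = l(k) + p̄`.
-/

/-- Number of ones in row `k` strictly to the left of column `l` (columns `1..l-1`). -/
def rowOnes (a : ℕ → ℕ → Bool) (k l : ℕ) : ℕ :=
  ((Finset.Ico 1 l).filter (fun j => a k j = true)).card

/-- Number of ones in column `l` strictly above row `k` (rows `1..k-1`). -/
def colOnes (a : ℕ → ℕ → Bool) (k l : ℕ) : ℕ :=
  ((Finset.Ico 1 k).filter (fun i => a i l = true)).card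

/-- The greedy (first-choice) matrix `A(n)`: entries are placed row by row, left to
right; a one is placed at `(k,l)` unless the row already has `n+1` ones to the left,
the column already has `n+1` ones above, or a rectangle of ones would be created. -/
def IsGreedy (n : ℕ) (a : ℕ → ℕ → Bool) : Prop :=
  (∀ i j, i = 0 ∨ j = 0 → a i j = false) ∧
  ∀ k l, 1 ≤ k → 1 ≤ l →
    (a k l = true ↔
      rowOnes a k l < n + 1 ∧ colOnes a k l < n + 1 ∧
      ¬ ∃ i j, 1 ≤ i ∧ i < k ∧ 1 ≤ j ∧ j < l ∧
        a i j = true ∧ a i l = true ∧ a k j = true)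

open Finset

def blockOnes (a : ℕ → ℕ → Bool) (f l h w : ℕ) : ℕ :=
  ∑ j ∈ range w, ∑ i ∈ range h, if a (f + i) (l + j) = true then 1 else 0

lemma blockOnes_congr {a : ℕ → ℕ → Bool} {f l f' l' h w : ℕ}
    (hM : ∀ i j, i < h → j < w → a (f' + i) (l' + j) = a (f + i) (l + j)) :
    blockOnes a f' l' h w = blockOnes a f l h w :=
  sum_congr rfl fun j hj => sum_congr rfl fun i hi => by
    rw [hM i j (mem_range.1 hi) (mem_range.1 hj)]

section Counting

variable (a : ℕ → ℕ → Bool)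

lemma colOnes_eq_sum (k l : ℕ) :
    colOnes a k l = ∑ i ∈ Ico 1 k, if a i l = true then 1 else 0 :=
  card_filter _ _

lemma rowOnes_eq_sum (k l : ℕ) :
    rowOnes a k l = ∑ j ∈ Ico 1 l, if a k j = true then 1 else 0 :=
  card_filter _ _

lemma colOnes_succ {k : ℕ} (hk : 1 ≤ k) (l : ℕ) :
    colOnes a (k + 1) l = colOnes a k l + if a k l = true then 1 else 0 := by
  rw [colOnes_eq_sum, colOnes_eq_sum, sum_Ico_succ_top hk]

lemma rowOnes_succ (k : ℕ) {l : ℕ} (hl : 1 ≤ l) :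
    rowOnes a k (l + 1) = rowOnes a k l + if a k l = true then 1 else 0 := by
  rw [rowOnes_eq_sum, rowOnes_eq_sum, sum_Ico_succ_top hl]

variable {a}

lemma colOnes_mono {i k : ℕ} (hik : i ≤ k) (l : ℕ) : colOnes a i l ≤ colOnes a k l :=
  card_le_card (filter_subset_filter _ (Ico_subset_Ico le_rfl hik))

lemma rowOnes_mono (k : ℕ) {l l' : ℕ} (hll : l ≤ l') : rowOnes a k l ≤ rowOnes a k l' :=
  card_le_card (filter_subset_filter _ (Ico_subset_Ico le_rfl hll))

variable (a)

lemma sum_rowOnes_eq_sum_colOnes (K C : ℕ) :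
    ∑ i ∈ Ico 1 K, rowOnes a i (C + 1) = ∑ j ∈ Ico 1 (C + 1), colOnes a K j := by
  simp only [rowOnes_eq_sum, colOnes_eq_sum]
  exact sum_comm

end Counting

namespace IsGreedy

variable {n : ℕ} {a : ℕ → ℕ → Bool}

lemma one_le_of_eq_true (h : IsGreedy n a) {i j : ℕ} (ht : a i j = true) :
    1 ≤ i ∧ 1 ≤ j := by
  by_contra hij
  have := h.1 i j (by omega)
  simp_all

lemma colOnes_le (h : IsGreedy n a) (k l : ℕ) : colOnes a k l ≤ n + 1 := by
  induction k with
  | zero => simp [colOnes]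
  | succ k ih =>
    rcases Nat.eq_zero_or_pos k with rfl | hk
    · simp [colOnes]
    rw [colOnes_succ a hk]
    by_cases hkl : a k l = true
    · have := ((h.2 k l hk (h.one_le_of_eq_true hkl).2).1 hkl).2.1
      simp only [hkl, if_true]
      omega
    · simpa [hkl] using ih

lemma rowOnes_le (h : IsGreedy n a) (k l : ℕ) : rowOnes a k l ≤ n + 1 := by
  induction l with
  | zero => simp [rowOnes]
  | succ l ih =>
    rcases Nat.eq_zero_or_pos l with rfl | hl
    · simp [rowOnes]
    rw [rowOnes_succ a k hl]
    by_cases hkl : a k l = true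
    · have := ((h.2 k l (h.one_le_of_eq_true hkl).1 hl).1 hkl).1
      simp only [hkl, if_true]
      omega
    · simpa [hkl] using ih

lemma eq_false_of_lt_firstRow (h : IsGreedy n a) {K L F : ℕ} (hL : 1 ≤ L)
    (hKL : colOnes a K L < n + 1) (hF : ∀ i, 1 ≤ i → i < K → a i L = true → F ≤ i)
    {i j : ℕ} (hi : 1 ≤ i) (hiF : i < F) (hiK : i < K) (hLj : L ≤ j) : a i j = false := by
  by_contra hne
  rw [Bool.not_eq_false] at hne
  have hiL : a i L = false := by
    by_contra hiL
    exact absurd (hF i hi hiK (Bool.not_eq_false _ ▸ hiL)) (by omega)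
  have hrow := ((h.2 i j hi (by omega)).1 hne).1
  -- `(i, L)` was skipped although row `i` and column `L` still had room,
  -- so it would have closed a rectangle through a one of column `L` above row `i < F`.
  have hskip := mt (h.2 i L hi hL).2 (by simp [hiL])
  have hroom : rowOnes a i L < n + 1 := (rowOnes_mono i hLj).trans_lt hrow
  have hcol : colOnes a i L < n + 1 := (colOnes_mono hiK.le L).trans_lt hKL
  obtain ⟨i', -, hi1', hi', -, -, -, hi'L, -⟩ := not_not.1 fun hno => hskip ⟨hroom, hcol, hno⟩
  exact absurd (hF i' hi1' (by omega) hi'L) (by omega)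

/-- A row with fewer than `n + 1` ones in columns `1..C` would receive a one in the empty
column `C + 1`. -/
lemma rowOnes_eq_of_forall_le (h : IsGreedy n a) {K C : ℕ}
    (hC : ∀ i j, 1 ≤ i → i < K → a i j = true → j ≤ C) {i : ℕ} (hi : 1 ≤ i) (hiK : i < K) :
    rowOnes a i (C + 1) = n + 1 := by
  have hempty : ∀ i', 1 ≤ i' → i' < K → a i' (C + 1) = false := fun i' h1 h2 => by
    by_contra hne
    exact absurd (hC i' (C + 1) h1 h2 (by simpa using hne)) (by omega)
  have hcol : colOnes a i (C + 1) = 0 := by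
    rw [colOnes_eq_sum]
    exact sum_eq_zero fun i' hi' => by
      rw [mem_Ico] at hi'
      simp [hempty i' hi'.1 (by omega)]
  refine le_antisymm (h.rowOnes_le i _) (not_lt.1 fun hlt => ?_)
  have ht : a i (C + 1) = true := by
    refine (h.2 i (C + 1) hi (by omega)).2 ⟨hlt, by omega, ?_⟩
    rintro ⟨i', -, h1, h2, -, -, -, h6, -⟩
    simp [hempty i' h1 (by omega)] at h6
  exact absurd (hC i (C + 1) hi hiK ht) (by omega)

lemma mul_eq_add_blockOnes (h : IsGreedy n a) {K L F C : ℕ} (hL1 : 1 ≤ L)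
    (hL2 : colOnes a K L < n + 1) (hL3 : ∀ l, 1 ≤ l → colOnes a K l < n + 1 → L ≤ l)
    (hF1 : 1 ≤ F) (hF2 : F < K) (hF3 : a F L = true)
    (hF4 : ∀ i, 1 ≤ i → i < K → a i L = true → F ≤ i)
    (hC : ∀ i j, 1 ≤ i → i < K → a i j = true → j ≤ C) :
    (K - 1) * (n + 1) = (L - 1) * (n + 1) + blockOnes a F L (K - F) (C + 1 - L) := by
  have hLC : L ≤ C := hC F L hF1 hF2 hF3
  have hleft : ∀ j ∈ Ico 1 L, colOnes a K j = n + 1 := fun j hj => by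
    rw [mem_Ico] at hj
    have := hL3 j hj.1
    have := h.colOnes_le K j
    omega
  have hright : ∀ j ∈ range (C + 1 - L),
      colOnes a K (L + j) = ∑ i ∈ range (K - F), if a (F + i) (L + j) = true then 1 else 0 := by
    intro j _
    have habove : ∑ i ∈ Ico 1 F, (if a i (L + j) = true then 1 else 0) = 0 :=
      sum_eq_zero fun i hi => by
        rw [mem_Ico] at hi
        rw [h.eq_false_of_lt_firstRow hL1 hL2 hF4 hi.1 hi.2 (by omega) (by omega)]
        rfl
    rw [colOnes_eq_sum, ← sum_Ico_consecutive _ hF1 hF2.le, habove, zero_add,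
      sum_Ico_eq_sum_range]
  calc (K - 1) * (n + 1) = ∑ i ∈ Ico 1 K, rowOnes a i (C + 1) := by
        rw [sum_congr rfl fun i hi => h.rowOnes_eq_of_forall_le hC (mem_Ico.1 hi).1
          (mem_Ico.1 hi).2, sum_const, Nat.card_Ico, smul_eq_mul]
    _ = ∑ j ∈ Ico 1 (C + 1), colOnes a K j := sum_rowOnes_eq_sum_colOnes a K C
    _ = ∑ j ∈ Ico 1 L, colOnes a K j + ∑ j ∈ range (C + 1 - L), colOnes a K (L + j) := by
        rw [← sum_Ico_eq_sum_range, sum_Ico_consecutive _ hL1 (by omega)]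
    _ = (L - 1) * (n + 1) + blockOnes a F L (K - F) (C + 1 - L) := by
        rw [sum_congr rfl hleft, sum_congr rfl hright, sum_const, Nat.card_Ico, smul_eq_mul,
          blockOnes]

end IsGreedy

theorem stmt15_general (n : ℕ) (a : ℕ → ℕ → Bool) (h : IsGreedy n a)
    (k pbar : ℕ)
    (lk lk' fk fk' ck ck' : ℕ)
    (hlk : 1 ≤ lk ∧ colOnes a k lk < n + 1 ∧
      ∀ l, 1 ≤ l → colOnes a k l < n + 1 → lk ≤ l)
    (hlk' : 1 ≤ lk' ∧ colOnes a (k + pbar) lk' < n + 1 ∧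
      ∀ l, 1 ≤ l → colOnes a (k + pbar) l < n + 1 → lk' ≤ l)
    (hfk : 1 ≤ fk ∧ fk < k ∧ a fk lk = true ∧
      ∀ i, 1 ≤ i → i < k → a i lk = true → fk ≤ i)
    (hfk' : 1 ≤ fk' ∧ fk' < k + pbar ∧ a fk' lk' = true ∧
      ∀ i, 1 ≤ i → i < k + pbar → a i lk' = true → fk' ≤ i)
    (hck : (∃ i, 1 ≤ i ∧ i < k ∧ a i ck = true) ∧
      ∀ i j, 1 ≤ i → i < k → a i j = true → j ≤ ck)
    (hck' : (∃ i, 1 ≤ i ∧ i < k + pbar ∧ a i ck' = true) ∧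
      ∀ i j, 1 ≤ i → i < k + pbar → a i j = true → j ≤ ck')
    (hdim : k - fk = (k + pbar) - fk' ∧ ck + 1 - lk = ck' + 1 - lk')
    (hM : ∀ i j, i < k - fk → j < ck + 1 - lk →
      a (fk' + i) (lk' + j) = a (fk + i) (lk + j)) :
    lk' = lk + pbar := by
  obtain ⟨hl1, hl2, hl3⟩ := hlk
  obtain ⟨hl1', hl2', hl3'⟩ := hlk'
  obtain ⟨hf1, hf2, hf3, hf4⟩ := hfk
  obtain ⟨hf1', hf2', hf3', hf4'⟩ := hfk'
  have hcount := h.mul_eq_add_blockOnes hl1 hl2 hl3 hf1 hf2 hf3 hf4 hck.2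
  have hcount' := h.mul_eq_add_blockOnes hl1' hl2' hl3' hf1' hf2' hf3' hf4' hck'.2
  rw [← hdim.1, ← hdim.2, blockOnes_congr hM] at hcount'
  have hsum : (k - 1 + (lk' - 1)) * (n + 1) = (k + pbar - 1 + (lk - 1)) * (n + 1) := by
    rw [Nat.add_mul, Nat.add_mul]
    omega
  have := Nat.eq_of_mul_eq_mul_right n.succ_pos hsum
  omega

/-- Lemma 3.4: if the defining matrices satisfy `M^(k+p̄) = M^k` (same dimensions and
same entries), then `l(k+p̄) = l(k) + p̄`, where `l(k)` is the least index of a column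
containing fewer than `n+1` ones among the first `k-1` rows, `fk` is the least row
with a one in column `l(k)`, and `ck` the largest column with a one in the first
`k-1` rows. -/
theorem stmt15 (n : ℕ) (a : ℕ → ℕ → Bool) (h : IsGreedy n a)
    (k pbar : ℕ) (hk : 2 ≤ k) (hpbar : 1 ≤ pbar)
    (lk lk' fk fk' ck ck' : ℕ)
    (hlk : 1 ≤ lk ∧ colOnes a k lk < n + 1 ∧
      ∀ l, 1 ≤ l → colOnes a k l < n + 1 → lk ≤ l)
    (hlk' : 1 ≤ lk' ∧ colOnes a (k + pbar) lk' < n + 1 ∧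
      ∀ l, 1 ≤ l → colOnes a (k + pbar) l < n + 1 → lk' ≤ l)
    (hfk : 1 ≤ fk ∧ fk < k ∧ a fk lk = true ∧
      ∀ i, 1 ≤ i → i < k → a i lk = true → fk ≤ i)
    (hfk' : 1 ≤ fk' ∧ fk' < k + pbar ∧ a fk' lk' = true ∧
      ∀ i, 1 ≤ i → i < k + pbar → a i lk' = true → fk' ≤ i)
    (hck : (∃ i, 1 ≤ i ∧ i < k ∧ a i ck = true) ∧
      ∀ i j, 1 ≤ i → i < k → a i j = true → j ≤ ck)
    (hck' : (∃ i, 1 ≤ i ∧ i < k + pbar ∧ a i ck' = true) ∧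
      ∀ i j, 1 ≤ i → i < k + pbar → a i j = true → j ≤ ck')
    (hdim : k - fk = (k + pbar) - fk' ∧ ck + 1 - lk = ck' + 1 - lk')
    (hM : ∀ i j, i < k - fk → j < ck + 1 - lk →
      a (fk' + i) (lk' + j) = a (fk + i) (lk + j)) :
    lk' = lk + pbar :=
  stmt15_general n a h k pbar lk lk' fk fk' ck ck' hlk hlk' hfk hfk' hck hck' hdim hM
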